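/- Let D be a digraph with S ∪ T = V(D), and v ∈ S ∩ T such that there is no directed path from v to any vertex of T \ S. Then for every ℓ, there is a transforming sequence from S to T of length at most ℓ in D if and only if there is a transforming sequence from S \ {v} to T \ {v} of length at most ℓ in D − v. -/

import Mathlib

/-
The tokens on the vertices reachable from `v` can never move: all of them lie in `S` (every
vertex is in `S ∪ T`, and none of them is in `T \ S`), a move ends on an empty vertex, and the
target of a move is reachable from its source. So a transforming sequence in `D` never touches
`v` or uses it as an intermediate vertex, and it is one in `D − v` as well. Conversely, a parked
token on `v` does not obstruct any move of `D − v`.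
-/

def doMove {V : Type*} [DecidableEq V] (C : Finset V) (m : V × V) : Finset V :=
  insert m.2 (C.erase m.1)

/-- A free path for the move from `s` to `t`: a path whose intermediate vertices
(the list `p`) avoid the tokens of the configuration `C`. -/
def FreePath {V : Type*} (A : V → V → Prop) (C : Finset V) (s t : V) : Prop :=
  ∃ p : List V, List.Chain A s (p ++ [t]) ∧ ∀ v ∈ p, v ∉ C

def ValidMove {V : Type*} (A : V → V → Prop) (C : Finset V) (m : V × V) : Prop :=
  m.1 ∈ C ∧ m.2 ∉ C ∧ FreePath A C m.1 m.2

/-- `Transforms A S ms T`: the sequence of moves `ms`, each valid after its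
predecessors, transforms the configuration `S` into the configuration `T`. -/
inductive Transforms {V : Type*} [DecidableEq V] (A : V → V → Prop) :
    Finset V → List (V × V) → Finset V → Prop
  | nil (C : Finset V) : Transforms A C [] C
  | cons {C T : Finset V} {m : V × V} {ms : List (V × V)} :
      ValidMove A C m → Transforms A (doMove C m) ms T → Transforms A C (m :: ms) T

section

variable {V : Type*} {A : V → V → Prop} {v : V}

/-- The arc relation of `D − v`. -/
def deleteVertex (A : V → V → Prop) (v : V) (a b : V) : Prop :=
  a ≠ v ∧ b ≠ v ∧ A a b

theorem isChain_deleteVertex_iff :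
    ∀ {l : List V}, 2 ≤ l.length → (l.IsChain (deleteVertex A v) ↔ l.IsChain A ∧ v ∉ l)
  | [a, b], _ => by
    simp only [List.isChain_pair, deleteVertex, List.mem_cons, List.not_mem_nil, or_false]
    tauto
  | a :: b :: c :: l, _ => by
    rw [List.isChain_cons_cons, isChain_deleteVertex_iff (l := b :: c :: l) (by simp)]
    simp only [List.isChain_cons_cons (a := a), deleteVertex, List.mem_cons, @eq_comm _ v]
    tauto

theorem FreePath.reflTransGen {C : Finset V} {s t : V} (h : FreePath A C s t) :
    Relation.ReflTransGen A s t :=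
  let ⟨p, hp, _⟩ := h
  List.relationReflTransGen_of_exists_isChain_cons (p ++ [t]) hp (by simp)

variable [DecidableEq V] {C T : Finset V} {m : V × V}

theorem FreePath.erase_of_ne {s t : V} (h : FreePath A C s t) (hv : v ∈ C) (hs : s ≠ v)
    (ht : t ≠ v) : FreePath (deleteVertex A v) (C.erase v) s t := by
  obtain ⟨p, hchain, hpC⟩ := h
  have hvp : v ∉ p := fun hvp => hpC v hvp hv
  refine ⟨p, (isChain_deleteVertex_iff (by simp)).2 ⟨hchain, ?_⟩,
    fun x hx hxC => hpC x hx (Finset.mem_of_mem_erase hxC)⟩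
  simp only [List.mem_cons, List.mem_append, List.not_mem_nil, or_false, not_or]
  exact ⟨hs.symm, hvp, ht.symm⟩

theorem FreePath.insert_of_deleteVertex {s t : V} (h : FreePath (deleteVertex A v) C s t) :
    FreePath A (insert v C) s t ∧ s ≠ v ∧ t ≠ v := by
  obtain ⟨p, hchain, hpC⟩ := h
  obtain ⟨hchainA, hvl⟩ := (isChain_deleteVertex_iff (by simp)).1 hchain
  simp only [List.mem_cons, List.mem_append, List.not_mem_nil, or_false, not_or] at hvl
  obtain ⟨hsv, hvp, htv⟩ := hvl
  refine ⟨⟨p, hchainA, fun x hx hxC => ?_⟩, Ne.symm hsv, Ne.symm htv⟩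
  rcases Finset.mem_insert.1 hxC with rfl | hxC
  · exact hvp hx
  · exact hpC x hx hxC

theorem doMove_erase_of_ne (ht : m.2 ≠ v) : doMove (C.erase v) m = (doMove C m).erase v := by
  rw [doMove, doMove, Finset.erase_insert_of_ne ht, Finset.erase_right_comm]

theorem doMove_insert_of_ne (hs : m.1 ≠ v) : doMove (insert v C) m = insert v (doMove C m) := by
  rw [doMove, doMove, Finset.erase_insert_of_ne hs.symm, Finset.insert_comm]

theorem Transforms.erase_of_reachable_subset {ms : List (V × V)} (h : Transforms A C ms T)
    (hreach : ∀ w, Relation.ReflTransGen A v w → w ∈ C) :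
    Transforms (deleteVertex A v) (C.erase v) ms (T.erase v) := by
  induction h with
  | nil C => exact .nil _
  | @cons C T m ms hm _ ih =>
    obtain ⟨hs, ht, hpath⟩ := hm
    have ht_unreach : ¬ Relation.ReflTransGen A v m.2 := fun hvt => ht (hreach _ hvt)
    have hs_unreach : ¬ Relation.ReflTransGen A v m.1 := fun hvs =>
      ht_unreach (hvs.trans hpath.reflTransGen)
    have hsv : m.1 ≠ v := fun hsv => hs_unreach (hsv ▸ .refl)
    have htv : m.2 ≠ v := fun htv => ht_unreach (htv ▸ .refl)
    have hvalid : ValidMove (deleteVertex A v) (C.erase v) m :=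
      ⟨Finset.mem_erase.2 ⟨hsv, hs⟩, fun ht' => ht (Finset.mem_of_mem_erase ht'),
        hpath.erase_of_ne (hreach v .refl) hsv htv⟩
    have hreach' : ∀ w, Relation.ReflTransGen A v w → w ∈ doMove C m := fun w hw =>
      Finset.mem_insert_of_mem <|
        Finset.mem_erase.2 ⟨fun hws => hs_unreach (hws ▸ hw), hreach w hw⟩
    exact .cons hvalid (doMove_erase_of_ne htv ▸ ih hreach')

theorem Transforms.insert_of_deleteVertex {ms : List (V × V)}
    (h : Transforms (deleteVertex A v) C ms T) : Transforms A (insert v C) ms (insert v T) := by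
  induction h with
  | nil C => exact .nil _
  | @cons C T m ms hm _ ih =>
    obtain ⟨hs, ht, hpath⟩ := hm
    obtain ⟨hpath', hsv, htv⟩ := FreePath.insert_of_deleteVertex hpath
    have hvalid : ValidMove A (insert v C) m :=
      ⟨Finset.mem_insert_of_mem hs, by simp [htv, ht], hpath'⟩
    exact .cons hvalid (doMove_insert_of_ne hsv ▸ ih)

end

theorem delete_obstacle_no_path_to_target_general {V : Type*} [DecidableEq V]
    (A : V → V → Prop) (S T : Finset V)
    (hcontr : (↑S ∪ ↑T : Set V) = Set.univ)
    (v : V) (hv : v ∈ S ∩ T)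
    (hnopath : ∀ w ∈ T \ S, ¬ Relation.ReflTransGen A v w) :
    ∀ ℓ : ℕ,
      ((∃ ms, Transforms A S ms T ∧ ms.length ≤ ℓ) ↔
       (∃ ms, Transforms (fun a b => a ≠ v ∧ b ≠ v ∧ A a b)
          (S.erase v) ms (T.erase v) ∧ ms.length ≤ ℓ)) := by
  obtain ⟨hvS, hvT⟩ := Finset.mem_inter.1 hv
  have hreach : ∀ w, Relation.ReflTransGen A v w → w ∈ S := fun w hw => by
    by_contra hwS
    have hw_cover : w ∈ (↑S ∪ ↑T : Set V) := hcontr ▸ Set.mem_univ w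
    have hwT : w ∈ T := hw_cover.resolve_left hwS
    exact hnopath w (Finset.mem_sdiff.2 ⟨hwT, hwS⟩) hw
  intro ℓ
  constructor
  · rintro ⟨ms, h, hlen⟩
    exact ⟨ms, h.erase_of_reachable_subset hreach, hlen⟩
  · rintro ⟨ms, h, hlen⟩
    refine ⟨ms, ?_, hlen⟩
    simpa only [Finset.insert_erase hvS, Finset.insert_erase hvT] using
      Transforms.insert_of_deleteVertex h

/-- For a contracted instance of unlabelled directed token moving and an
obstacle `v ∈ S ∩ T` with no directed path from `v` to any vertex of `T \ S`,
deleting `v` preserves, for every `ℓ`, the existence of a transforming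
sequence of length at most `ℓ`. -/
theorem delete_obstacle_no_path_to_target {V : Type*} [DecidableEq V]
    (A : V → V → Prop) (S T : Finset V) (hcard : S.card = T.card)
    (hcontr : (↑S ∪ ↑T : Set V) = Set.univ)
    (v : V) (hv : v ∈ S ∩ T)
    (hnopath : ∀ w ∈ T \ S, ¬ Relation.ReflTransGen A v w) :
    ∀ ℓ : ℕ,
      ((∃ ms, Transforms A S ms T ∧ ms.length ≤ ℓ) ↔
       (∃ ms, Transforms (fun a b => a ≠ v ∧ b ≠ v ∧ A a b)
          (S.erase v) ms (T.erase v) ∧ ms.length ≤ ℓ)) :=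
  delete_obstacle_no_path_to_target_general A S T hcontr v hv hnopath
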